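/- For n ≥ 2 and any fixed k with 1 ≤ k ≤ n, the number of edges uv of the Fibonacci cube Γ_n whose endpoints differ in coordinate k equals f_k * f_{n-k+1}. -/

import Mathlib

open Finset

def noConsec (n : ℕ) (b : Fin n → Bool) : Prop :=
  ∀ i j : Fin n, (j : ℕ) = (i : ℕ) + 1 → ¬(b i = true ∧ b j = true)

instance (n : ℕ) : DecidablePred (noConsec n) := fun _ => by
  unfold noConsec; infer_instance

lemma noConsec_iff {m : ℕ} (b : Fin m → Bool) :
    noConsec m b ↔ ∀ i : ℕ, ∀ h : i + 1 < m,
      ¬(b ⟨i, by omega⟩ = true ∧ b ⟨i+1, h⟩ = true) := by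
  constructor
  · intro H i h
    exact H ⟨i, by omega⟩ ⟨i+1, h⟩ rfl
  · intro H i j hij
    have h : (i : ℕ) + 1 < m := hij ▸ j.isLt
    have := H i.1 h
    simpa [Fin.eta, show j = ⟨i.1+1, h⟩ from Fin.ext hij] using this

lemma cons_mk_succ {m : ℕ} (x : Bool) (t : Fin m → Bool) (i : ℕ) (h : i + 1 < m + 1) :
    (Fin.cons x t : Fin (m+1) → Bool) ⟨i+1, h⟩ = t ⟨i, by omega⟩ := by
  have : (⟨i+1, h⟩ : Fin (m+1)) = Fin.succ ⟨i, by omega⟩ := rfl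
  rw [this, Fin.cons_succ]

lemma cons_mk_zero {m : ℕ} (x : Bool) (t : Fin m → Bool) (h : 0 < m + 1) :
    (Fin.cons x t : Fin (m+1) → Bool) ⟨0, h⟩ = x := rfl

lemma noConsec_cons {m : ℕ} (x : Bool) (t : Fin m → Bool) :
    noConsec (m+1) (Fin.cons x t) ↔
      noConsec m t ∧ (x = true → ∀ j : Fin m, (j : ℕ) = 0 → t j = false) := by
  simp only [noConsec_iff]
  constructor
  · intro H
    refine ⟨fun i h => ?_, fun hx j hj => ?_⟩
    · have := H (i+1) (by omega)
      rw [cons_mk_succ, cons_mk_succ] at this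
      exact this
    · have hj' : (j:ℕ) < m := j.isLt
      have hm : (0:ℕ) + 1 < m + 1 := by omega
      have := H 0 hm
      rw [cons_mk_zero, cons_mk_succ] at this
      have h0 : ¬ t ⟨0, by omega⟩ = true := fun ht => this ⟨hx, ht⟩
      have hj0 : j = ⟨0, by omega⟩ := Fin.ext hj
      rw [hj0]
      simpa using h0
  · rintro ⟨H1, H2⟩ i h
    match i with
    | 0 =>
      rintro ⟨ha, hb⟩
      rw [cons_mk_zero] at ha
      rw [cons_mk_succ] at hb
      have := H2 ha ⟨0, by omega⟩ rfl
      simp [this] at hb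
    | (i+1) =>
      have := H1 i (by omega)
      rw [cons_mk_succ, cons_mk_succ]
      exact this

def Sn (m : ℕ) := {b : Fin m → Bool // noConsec m b}
def Sf (m : ℕ) := {b : Fin m → Bool // noConsec m b ∧ ∀ j : Fin m, (j : ℕ) = 0 → b j = false}
def Sl (m : ℕ) := {b : Fin m → Bool // noConsec m b ∧ ∀ j : Fin m, (j : ℕ) + 1 = m → b j = false}

instance (m : ℕ) : Fintype (Sn m) := Subtype.fintype _
instance (m : ℕ) : Fintype (Sf m) := Subtype.fintype _
instance (m : ℕ) : Fintype (Sl m) := Subtype.fintype _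

def consEquiv (m : ℕ) : Sn (m+1) ≃ Sn m ⊕ Sf m where
  toFun b := if h : b.1 0 = true then
      .inr ⟨Fin.tail b.1, by
        have := (noConsec_cons (b.1 0) (Fin.tail b.1)).mp (by rw [Fin.cons_self_tail]; exact b.2)
        exact ⟨this.1, this.2 h⟩⟩
    else .inl ⟨Fin.tail b.1, by
        have := (noConsec_cons (b.1 0) (Fin.tail b.1)).mp (by rw [Fin.cons_self_tail]; exact b.2)
        exact this.1⟩
  invFun := Sum.elim
    (fun t => ⟨Fin.cons false t.1, (noConsec_cons false t.1).mpr ⟨t.2, by simp⟩⟩)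
    (fun t => ⟨Fin.cons true t.1, (noConsec_cons true t.1).mpr ⟨t.2.1, fun _ => t.2.2⟩⟩)
  left_inv b := by
    dsimp only
    by_cases h : b.1 0 = true
    · rw [dif_pos h]
      apply Subtype.ext
      show Fin.cons true (Fin.tail b.1) = b.1
      conv_rhs => rw [← Fin.cons_self_tail b.1]
      rw [h]
    · rw [dif_neg h]
      apply Subtype.ext
      show Fin.cons false (Fin.tail b.1) = b.1
      conv_rhs => rw [← Fin.cons_self_tail b.1]
      rw [Bool.not_eq_true] at h
      rw [h]
  right_inv t := by
    rcases t with t | t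
    · dsimp only [Sum.elim_inl]
      rw [dif_neg (by exact fun h => Bool.false_ne_true h)]
      congr 1
    · dsimp only [Sum.elim_inr]
      rw [dif_pos (by exact rfl)]
      congr 1

def consFalseEquiv (m : ℕ) : Sf (m+1) ≃ Sn m where
  toFun b := ⟨Fin.tail b.1, by
    have := (noConsec_cons (b.1 0) (Fin.tail b.1)).mp (by rw [Fin.cons_self_tail]; exact b.2.1)
    exact this.1⟩
  invFun t := ⟨Fin.cons false t.1, (noConsec_cons false t.1).mpr ⟨t.2, by simp⟩,
    fun j hj => by
      have : j = 0 := Fin.ext hj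
      rw [this]; rfl⟩
  left_inv b := by
    apply Subtype.ext
    have h0 : b.1 0 = false := b.2.2 0 rfl
    conv_rhs => rw [← Fin.cons_self_tail b.1]
    rw [h0]
  right_inv t := by
    apply Subtype.ext
    exact funext fun i => by simp [Fin.tail]

lemma card_Sn_zero : Fintype.card (Sn 0) = 1 := by
  rw [Fintype.card_eq_one_iff]
  refine ⟨⟨fun i => i.elim0, fun i => i.elim0⟩, fun b => ?_⟩
  exact Subtype.ext (funext fun i => i.elim0)

lemma card_Sf_zero : Fintype.card (Sf 0) = 1 := by
  rw [Fintype.card_eq_one_iff]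
  refine ⟨⟨fun i => i.elim0, fun i => i.elim0, fun i => i.elim0⟩, fun b => ?_⟩
  exact Subtype.ext (funext fun i => i.elim0)

lemma cards (m : ℕ) : Fintype.card (Sn m) = Nat.fib (m+2) ∧
    Fintype.card (Sf m) = Nat.fib (m+1) := by
  induction m with
  | zero => exact ⟨card_Sn_zero, card_Sf_zero⟩
  | succ m ih =>
    have h1 : Fintype.card (Sn (m+1)) = Fintype.card (Sn m) + Fintype.card (Sf m) := by
      rw [Fintype.card_congr (consEquiv m), Fintype.card_sum]
    have h2 : Fintype.card (Sf (m+1)) = Fintype.card (Sn m) :=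
      Fintype.card_congr (consFalseEquiv m)
    refine ⟨?_, ?_⟩
    · rw [h1, ih.1, ih.2,
        show Nat.fib (m+1+2) = Nat.fib (m+1) + Nat.fib (m+2) from Nat.fib_add_two]
      omega
    · rw [h2, ih.1]

lemma noConsec_rev {m : ℕ} (b : Fin m → Bool) (h : noConsec m b) :
    noConsec m (fun j => b (Fin.rev j)) := by
  rw [noConsec_iff] at h ⊢
  intro i hi
  have h2 : (m - (i+2)) + 1 < m := by omega
  have := h (m - (i+2)) h2
  have e1 : Fin.rev (⟨i, by omega⟩ : Fin m) = ⟨m - (i+2) + 1, h2⟩ := by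
    apply Fin.ext; simp only [Fin.val_rev]; try omega
  have e2 : Fin.rev (⟨i+1, hi⟩ : Fin m) = ⟨m - (i+2), by omega⟩ := by
    apply Fin.ext; simp only [Fin.val_rev]; try omega
  rw [e1, e2]
  tauto

def revEquiv (m : ℕ) : Sl m ≃ Sf m where
  toFun b := ⟨fun j => b.1 (Fin.rev j), noConsec_rev _ b.2.1, by
    intro j hj
    apply b.2.2
    have : 0 < m := j.pos
    simp [hj]
    omega⟩
  invFun b := ⟨fun j => b.1 (Fin.rev j), noConsec_rev _ b.2.1, by
    intro j hj
    apply b.2.2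
    simp
    omega⟩
  left_inv b := Subtype.ext (funext fun j => by simp)
  right_inv b := Subtype.ext (funext fun j => by simp)

lemma km1_lt {n k : ℕ} (hk1 : 1 ≤ k) (hk2 : k ≤ n) : k - 1 < n :=
  Nat.lt_of_lt_of_le (Nat.sub_lt hk1 Nat.one_pos) hk2

def U (n k : ℕ) (h : k - 1 < n) :=
  {u : Fin n → Bool // noConsec n u ∧ u ⟨k-1, h⟩ = false ∧
    (∀ j : Fin n, (j : ℕ) + 1 = k - 1 → u j = false) ∧
    (∀ j : Fin n, (j : ℕ) = k → u j = false)}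

instance (n k : ℕ) (h : k - 1 < n) : Fintype (U n k h) := Subtype.fintype _

def splitEquiv (n k : ℕ) (hk1 : 1 ≤ k) (hk2 : k ≤ n) :
    U n k (km1_lt hk1 hk2) ≃ Sl (k-1) × Sf (n-k) where
  toFun u :=
    (⟨fun j => u.1 ⟨j, by have := j.isLt; omega⟩, by
        rw [noConsec_iff]
        intro i hi
        exact (noConsec_iff u.1).mp u.2.1 i (by omega), by
        intro j hj
        exact u.2.2.2.1 ⟨j, by have := j.isLt; omega⟩ hj⟩,
     ⟨fun j => u.1 ⟨k + j, by have := j.isLt; omega⟩, by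
        rw [noConsec_iff]
        intro i hi
        exact (noConsec_iff u.1).mp u.2.1 (k + i) (by omega), by
        intro j hj
        exact u.2.2.2.2 ⟨k + j, by have := j.isLt; omega⟩ (show k + (j:ℕ) = k by omega)⟩)
  invFun lr :=
    ⟨fun j => if h : (j : ℕ) < k - 1 then lr.1.1 ⟨j, h⟩
      else if h2 : k ≤ (j : ℕ) then lr.2.1 ⟨(j : ℕ) - k, by have := j.isLt; omega⟩
      else false, by
        rw [noConsec_iff]
        intro a ha
        dsimp only
        by_cases h1 : a + 1 < k - 1
        · rw [dif_pos (show a < k - 1 by omega), dif_pos (show a + 1 < k - 1 from h1)]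
          exact (noConsec_iff lr.1.1).mp lr.1.2.1 a (by omega)
        · by_cases h2 : a + 1 = k - 1
          · rw [dif_neg (show ¬ (a + 1 < k - 1) by omega),
              dif_neg (show ¬ (k ≤ a + 1) by omega)]
            rintro ⟨-, hb⟩
            simp at hb
          · by_cases h3 : a = k - 1
            · rw [dif_neg (show ¬ (a < k - 1) by omega), dif_neg (show ¬ (k ≤ a) by omega)]
              rintro ⟨ha', -⟩
              simp at ha'
            · have hak : k ≤ a := by omega
              rw [dif_neg (show ¬ (a < k - 1) by omega), dif_pos hak,
                dif_neg (show ¬ (a + 1 < k - 1) by omega), dif_pos (show k ≤ a + 1 by omega)]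
              have e : (⟨a + 1 - k, by omega⟩ : Fin (n - k)) = ⟨(a - k) + 1, by omega⟩ :=
                Fin.ext (show a + 1 - k = (a - k) + 1 by omega)
              rw [e]
              exact (noConsec_iff lr.2.1).mp lr.2.2.1 (a - k) (by omega), by
        dsimp only
        rw [dif_neg (show ¬ (k - 1 < k - 1) by omega), dif_neg (show ¬ (k ≤ k - 1) by omega)], by
        intro j hj
        dsimp only
        rw [dif_pos (show (j:ℕ) < k - 1 by omega)]
        exact lr.1.2.2 ⟨j, by omega⟩ hj, by
        intro j hj
        dsimp only
        rw [dif_neg (show ¬ ((j:ℕ) < k - 1) by omega), dif_pos (show k ≤ (j:ℕ) by omega)]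
        exact lr.2.2.2 ⟨(j : ℕ) - k, by have := j.isLt; omega⟩ (show (j:ℕ) - k = 0 by omega)⟩
  left_inv u := by
    apply Subtype.ext
    funext j
    dsimp only
    by_cases h1 : (j : ℕ) < k - 1
    · rw [dif_pos h1]
    · by_cases h2 : k ≤ (j : ℕ)
      · rw [dif_neg h1, dif_pos h2]
        exact congrArg u.1 (Fin.ext (show k + ((j:ℕ) - k) = (j:ℕ) by omega))
      · rw [dif_neg h1, dif_neg h2]
        have hj : j = ⟨k - 1, km1_lt hk1 hk2⟩ := Fin.ext (show (j:ℕ) = k - 1 by omega)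
        rw [hj]
        exact (u.2.2.1).symm
  right_inv lr := by
    apply Prod.ext
    · apply Subtype.ext
      funext j
      dsimp only
      rw [dif_pos (show (j:ℕ) < k - 1 from j.isLt)]
    · apply Subtype.ext
      funext j
      dsimp only
      rw [dif_neg (show ¬ (k + (j:ℕ) < k - 1) by omega),
        dif_pos (show k ≤ k + (j:ℕ) by omega)]
      exact congrArg lr.2.1 (Fin.ext (show k + (j:ℕ) - k = (j:ℕ) by omega))

lemma hammingDist_update {n : ℕ} (u : Fin n → Bool) (i : Fin n) (h : u i = false) :
    hammingDist u (Function.update u i true) = 1 := by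
  unfold hammingDist
  rw [Finset.card_eq_one]
  refine ⟨i, ?_⟩
  ext j
  simp only [mem_filter, mem_univ, true_and, mem_singleton, Function.update_apply]
  by_cases hj : j = i
  · subst hj; simp [h]
  · simp [hj]

lemma eq_update_of_hd_one {n : ℕ} {u v : Fin n → Bool} {i : Fin n}
    (hd : hammingDist u v = 1) (hne : u i ≠ v i) : v = Function.update u i (v i) := by
  funext j
  rcases eq_or_ne j i with rfl | hj
  · rw [Function.update_self]
  · rw [Function.update_of_ne hj]
    by_contra hvj
    have hsub : ({i, j} : Finset (Fin n)) ⊆ Finset.univ.filter (fun a => u a ≠ v a) := by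
      intro a haa
      simp only [mem_insert, mem_singleton] at haa
      simp only [mem_filter, mem_univ, true_and]
      rcases haa with rfl | rfl
      · exact hne
      · exact fun h => hvj h.symm
    have h2 : ({i, j} : Finset (Fin n)).card = 2 := by
      rw [card_insert_of_notMem (by simpa using fun h => hj h.symm), card_singleton]
    have := Finset.card_le_card hsub
    unfold hammingDist at hd
    rw [hd] at this
    omega

lemma noConsec_update (n k : ℕ) (hk1 : 1 ≤ k) (hk2 : k ≤ n) (u : Fin n → Bool)
    (hu : noConsec n u)
    (h3 : ∀ j : Fin n, (j : ℕ) + 1 = k - 1 → u j = false)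
    (h4 : ∀ j : Fin n, (j : ℕ) = k → u j = false) :
    noConsec n (Function.update u ⟨k-1, km1_lt hk1 hk2⟩ true) := by
  rw [noConsec_iff]
  intro a ha
  rw [Function.update_apply, Function.update_apply]
  by_cases h1 : a = k - 1
  · rw [if_pos (Fin.ext h1), if_neg (by simp; omega)]
    rintro ⟨-, hb⟩
    rw [h4 ⟨a+1, ha⟩ (show a + 1 = k by omega)] at hb
    simp at hb
  · by_cases hb1 : a + 1 = k - 1
    · rw [if_neg (by simp; omega), if_pos (Fin.ext hb1)]
      rintro ⟨ha', -⟩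
      rw [h3 ⟨a, by omega⟩ hb1] at ha'
      simp at ha'
    · rw [if_neg (by simp; omega), if_neg (by simp; omega)]
      exact (noConsec_iff u).mp hu a ha

def FibVertex (n : ℕ) := {b : Fin n → Bool // noConsec n b}

instance (n : ℕ) : Fintype (FibVertex n) := Subtype.fintype _
instance (n : ℕ) : DecidableEq (FibVertex n) := Subtype.instDecidableEq


lemma update_eq_snd (n k : ℕ) (hn : 2 ≤ n) (hk1 : 1 ≤ k) (hk2 : k ≤ n)
    (p : {p : FibVertex n × FibVertex n //
      hammingDist p.1.1 p.2.1 = 1 ∧ p.1.1 ⟨k-1, km1_lt hk1 hk2⟩ = false ∧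
        p.2.1 ⟨k-1, km1_lt hk1 hk2⟩ = true}) :
    Function.update p.1.1.1 ⟨k-1, km1_lt hk1 hk2⟩ true = p.1.2.1 := by
  obtain ⟨hd, hu, hv⟩ := p.2
  have hne : p.1.1.1 ⟨k-1, km1_lt hk1 hk2⟩ ≠ p.1.2.1 ⟨k-1, km1_lt hk1 hk2⟩ := by
    rw [hu, hv]; simp
  have hvu := eq_update_of_hd_one hd hne
  rw [hv] at hvu
  exact hvu.symm

lemma cond3 (n k : ℕ) (hn : 2 ≤ n) (hk1 : 1 ≤ k) (hk2 : k ≤ n)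
    (p : {p : FibVertex n × FibVertex n //
      hammingDist p.1.1 p.2.1 = 1 ∧ p.1.1 ⟨k-1, km1_lt hk1 hk2⟩ = false ∧
        p.2.1 ⟨k-1, km1_lt hk1 hk2⟩ = true}) :
    ∀ j : Fin n, (j : ℕ) + 1 = k - 1 → p.1.1.1 j = false := by
  have hvu := update_eq_snd n k hn hk1 hk2 p
  intro j hj
  by_contra hj'
  have hjne : j ≠ (⟨k-1, km1_lt hk1 hk2⟩ : Fin n) := fun he => by
    have hje : (j : ℕ) = k - 1 := congrArg Fin.val he
    omega
  have hvj : p.1.2.1 j = true := by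
    rw [← hvu, Function.update_of_ne hjne]
    simpa using hj'
  exact p.1.2.2 j ⟨k-1, km1_lt hk1 hk2⟩ (show k - 1 = (j:ℕ) + 1 by omega) ⟨hvj, p.2.2.2⟩

lemma cond4 (n k : ℕ) (hn : 2 ≤ n) (hk1 : 1 ≤ k) (hk2 : k ≤ n)
    (p : {p : FibVertex n × FibVertex n //
      hammingDist p.1.1 p.2.1 = 1 ∧ p.1.1 ⟨k-1, km1_lt hk1 hk2⟩ = false ∧
        p.2.1 ⟨k-1, km1_lt hk1 hk2⟩ = true}) :
    ∀ j : Fin n, (j : ℕ) = k → p.1.1.1 j = false := by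
  have hvu := update_eq_snd n k hn hk1 hk2 p
  intro j hj
  by_contra hj'
  have hjne : j ≠ (⟨k-1, km1_lt hk1 hk2⟩ : Fin n) := fun he => by
    have hje : (j : ℕ) = k - 1 := congrArg Fin.val he
    omega
  have hvj : p.1.2.1 j = true := by
    rw [← hvu, Function.update_of_ne hjne]
    simpa using hj'
  exact p.1.2.2 ⟨k-1, km1_lt hk1 hk2⟩ j (show (j:ℕ) = (k-1) + 1 by omega) ⟨p.2.2.2, hvj⟩

def pairEquiv (n k : ℕ) (hn : 2 ≤ n) (hk1 : 1 ≤ k) (hk2 : k ≤ n) :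
    {p : FibVertex n × FibVertex n //
      hammingDist p.1.1 p.2.1 = 1 ∧ p.1.1 ⟨k-1, km1_lt hk1 hk2⟩ = false ∧
        p.2.1 ⟨k-1, km1_lt hk1 hk2⟩ = true} ≃ U n k (km1_lt hk1 hk2) where
  toFun p := ⟨p.1.1.1, p.1.1.2, p.2.2.1, cond3 n k hn hk1 hk2 p, cond4 n k hn hk1 hk2 p⟩
  invFun u := ⟨(⟨u.1, u.2.1⟩,
      ⟨Function.update u.1 ⟨k-1, km1_lt hk1 hk2⟩ true,
        noConsec_update n k hk1 hk2 u.1 u.2.1 u.2.2.2.1 u.2.2.2.2⟩),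
    hammingDist_update u.1 _ u.2.2.1, u.2.2.1, Function.update_self _ _ _⟩
  left_inv p := Subtype.ext (Prod.ext (Subtype.ext rfl)
    (Subtype.ext (update_eq_snd n k hn hk1 hk2 p)))
  right_inv u := Subtype.ext rfl

lemma card_U (n k : ℕ) (hn : 2 ≤ n) (hk1 : 1 ≤ k) (hk2 : k ≤ n) :
    Fintype.card (U n k (km1_lt hk1 hk2)) = Nat.fib k * Nat.fib (n - k + 1) := by
  rw [Fintype.card_congr (splitEquiv n k hk1 hk2), Fintype.card_prod,
    Fintype.card_congr (revEquiv (k-1)), (cards (k-1)).2, (cards (n-k)).2,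
    show k - 1 + 1 = k by omega]

/-- Each edge of Γ_n whose endpoints differ in (1-based) coordinate `k` is counted exactly
once as the ordered pair `(u, v)` with `u_k = 0` and `v_k = 1`. -/
theorem count_edges_at_coordinate (n k : ℕ) (hn : 2 ≤ n) (hk1 : 1 ≤ k) (hk2 : k ≤ n) :
    ((univ : Finset (FibVertex n × FibVertex n)).filter
        (fun p => hammingDist p.1.1 p.2.1 = 1 ∧
          p.1.1 ⟨k - 1, by omega⟩ = false ∧ p.2.1 ⟨k - 1, by omega⟩ = true)).card =
      Nat.fib k * Nat.fib (n - k + 1) := by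
  rw [← Fintype.card_subtype]
  rw [Fintype.card_congr (pairEquiv n k hn hk1 hk2)]
  exact card_U n k hn hk1 hk2
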